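/- Let 0<s,α<1 with s/α<1, and let 1<p≤∞ with 1<pα≤∞. If f : ℝ → ℝ (or ℂ → ℂ) is Hölder continuous of order α, then ‖f(u)‖_{Ḃ^s_{p,∞}} ≲ ‖u‖_{Ḃ^{s/α}_{pα,∞}}^α for all u in the homogeneous Besov space Ḃ^{s/α}_{pα,∞}(ℝ^d). -/

import Mathlib

open MeasureTheory ENNReal

/-- Homogeneous Besov `Ḃ^s_{p,∞}` seminorm via the difference characterization:
`‖u‖_{Ḃ^s_{p,∞}} = sup_t |t|^{-s} ‖u(·+t) − u(·)‖_{L^p}`. -/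
noncomputable def besovSup (d : ℕ) (s : ℝ) (p : ℝ≥0∞)
    (u : EuclideanSpace ℝ (Fin d) → ℝ) : ℝ≥0∞ :=
  ⨆ t : EuclideanSpace ℝ (Fin d),
    (‖t‖₊ : ℝ≥0∞) ^ (-s) * eLpNorm (fun x => u (x + t) - u x) p volume

/-- Pointwise `‖f ∘ g - f ∘ h‖ ≤ L ‖g - h‖ ^ α`, and `‖ |w| ^ α ‖_{L^p} = ‖w‖_{L^{pα}} ^ α`. -/
theorem eLpNorm_comp_sub_comp_le_of_holder {X E F : Type*} [MeasurableSpace X]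
    [NormedAddCommGroup E] [NormedAddCommGroup F] {μ : Measure X} {p : ℝ≥0∞} {α L : ℝ}
    (hα : 0 < α) (hL : 0 ≤ L) {f : E → F} (hf : ∀ z w, ‖f z - f w‖ ≤ L * ‖z - w‖ ^ α)
    (g h : X → E) :
    eLpNorm (fun x => f (g x) - f (h x)) p μ
      ≤ ENNReal.ofReal L * eLpNorm (fun x => g x - h x) (p * ENNReal.ofReal α) μ ^ α := by
  calc eLpNorm (fun x => f (g x) - f (h x)) p μ
      ≤ eLpNorm (L • fun x => ‖g x - h x‖ ^ α) p μ := by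
        refine eLpNorm_mono fun x => ?_
        rw [Pi.smul_apply, smul_eq_mul, Real.norm_of_nonneg (by positivity)]
        exact hf (g x) (h x)
    _ = ENNReal.ofReal L * eLpNorm (fun x => g x - h x) (p * ENNReal.ofReal α) μ ^ α := by
        rw [eLpNorm_const_smul, eLpNorm_norm_rpow _ hα, Real.enorm_of_nonneg hL]

theorem rpow_neg_mul_rpow_eq_rpow (a b : ℝ≥0∞) {s α : ℝ} (hα : 0 < α) :
    a ^ (-s) * b ^ α = (a ^ (-(s / α)) * b) ^ α := by
  rw [ENNReal.mul_rpow_of_nonneg _ _ hα.le, ← ENNReal.rpow_mul, neg_mul, div_mul_cancel₀ _ hα.ne']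

theorem besovSup_le_mul_rpow {d : ℕ} {s α : ℝ} (hα : 0 < α) {p q : ℝ≥0∞} {C : ℝ≥0∞}
    {u v : EuclideanSpace ℝ (Fin d) → ℝ}
    (huv : ∀ t, eLpNorm (fun x => v (x + t) - v x) p volume
      ≤ C * eLpNorm (fun x => u (x + t) - u x) q volume ^ α) :
    besovSup d s p v ≤ C * besovSup d (s / α) q u ^ α := by
  refine iSup_le fun t => ?_
  calc (‖t‖₊ : ℝ≥0∞) ^ (-s) * eLpNorm (fun x => v (x + t) - v x) p volume
      ≤ (‖t‖₊ : ℝ≥0∞) ^ (-s) * (C * eLpNorm (fun x => u (x + t) - u x) q volume ^ α) := by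
        gcongr
        exact huv t
    _ = C * ((‖t‖₊ : ℝ≥0∞) ^ (-(s / α)) * eLpNorm (fun x => u (x + t) - u x) q volume) ^ α := by
        rw [mul_left_comm, rpow_neg_mul_rpow_eq_rpow _ _ hα]
    _ ≤ C * besovSup d (s / α) q u ^ α := by
        gcongr
        exact le_iSup (fun t : EuclideanSpace ℝ (Fin d) =>
          (‖t‖₊ : ℝ≥0∞) ^ (-(s / α)) * eLpNorm (fun x => u (x + t) - u x) q volume) t

theorem stmt2_general (d : ℕ) (s α : ℝ) (hα0 : 0 < α) (p : ℝ≥0∞) (f : ℝ → ℝ) (L : ℝ) (hL : 0 < L)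
    (hf : ∀ z w : ℝ, |f z - f w| ≤ L * |z - w| ^ α) :
    ∃ C : ℝ≥0∞, 0 < C ∧ C ≠ ∞ ∧ ∀ u : EuclideanSpace ℝ (Fin d) → ℝ,
      besovSup d s p (fun x => f (u x))
        ≤ C * (besovSup d (s / α) (p * ENNReal.ofReal α) u) ^ α := by
  refine ⟨ENNReal.ofReal L, ENNReal.ofReal_pos.2 hL, ENNReal.ofReal_ne_top, fun u =>
    besovSup_le_mul_rpow hα0 fun t => ?_⟩
  exact eLpNorm_comp_sub_comp_le_of_holder hα0 hL.le (by simpa only [Real.norm_eq_abs] using hf)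
    (fun x => u (x + t)) u

/-- If `0 < s, α < 1`, `s/α < 1`, `1 < p ≤ ∞`, `1 < pα ≤ ∞` and `f` is Hölder continuous of
order `α`, then `‖f(u)‖_{Ḃ^s_{p,∞}} ≲ ‖u‖_{Ḃ^{s/α}_{pα,∞}}^α`. -/
theorem stmt2 (d : ℕ) (hd : 1 ≤ d) (s α : ℝ)
    (hs0 : 0 < s) (hs1 : s < 1) (hα0 : 0 < α) (hα1 : α < 1) (hsα : s / α < 1)
    (p : ℝ≥0∞) (hp : 1 < p) (hpα : 1 < p * ENNReal.ofReal α)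
    (f : ℝ → ℝ) (L : ℝ) (hL : 0 < L)
    (hf : ∀ z w : ℝ, |f z - f w| ≤ L * |z - w| ^ α) :
    ∃ C : ℝ≥0∞, 0 < C ∧ C ≠ ∞ ∧ ∀ u : EuclideanSpace ℝ (Fin d) → ℝ,
      besovSup d s p (fun x => f (u x))
        ≤ C * (besovSup d (s / α) (p * ENNReal.ofReal α) u) ^ α :=
  stmt2_general d s α hα0 p f L hL hf
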